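/- arXiv:0802.0433 — 2 statements merged into one kernel-verified Lean document; each statement's English description precedes it below -/
import Mathlib

section
/- Let Q^(S) and Q^(R) be the quantile functions of two GP distributions with parameters (μ_S, σ_S, ξ_S) and (μ_R, σ_R, ξ_R) respectively (all shapes nonzero). If Q^(S)(p) = C · Q^(R)(p) for all p ∈ (0,1) for some constant C > 0, then ξ_S = ξ_R, μ_S = C·μ_R, and σ_S = C·σ_R. -/
/-!
Substituting `x = 1 - p`, both quantile functions have the form `x ↦ α + β x ^ s` on `(0, 1)`.
Sampling at `x = y, y², y³` turns such a function into `α + β u, α + β u², α + β u³` with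
`u = y ^ s`. Two such triples, the second non-constant, agree only if `u` and the coefficients
do, and `u = y ^ s` then pins down the exponent as well.
-/

open Real Set

theorem eq_of_affine_pow_eq {α β u γ δ v : ℝ} (hδ : δ ≠ 0) (hv₀ : v ≠ 0) (hv₁ : v ≠ 1)
    (h₁ : α + β * u = γ + δ * v) (h₂ : α + β * u ^ 2 = γ + δ * v ^ 2)
    (h₃ : α + β * u ^ 3 = γ + δ * v ^ 3) :
    u = v ∧ β = δ ∧ α = γ := by
  have hv : δ * v * (v - 1) ≠ 0 := mul_ne_zero (mul_ne_zero hδ hv₀) (sub_ne_zero.mpr hv₁)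
  have hd₂ : β * u * (u - 1) = δ * v * (v - 1) := by linear_combination h₂ - h₁
  have huv : u = v := by
    have : δ * v * (v - 1) * (u - v) = 0 := by
      linear_combination h₃ - h₁ - (u + 1) * hd₂
    exact sub_eq_zero.mp ((mul_eq_zero.mp this).resolve_left hv)
  subst huv
  have hβ : β = δ := by
    have : (β - δ) * (u * (u - 1)) = 0 := by linear_combination hd₂
    exact sub_eq_zero.mp ((mul_eq_zero.mp this).resolve_right
      (mul_ne_zero hv₀ (sub_ne_zero.mpr hv₁)))
  subst hβ
  exact ⟨rfl, rfl, by linarith⟩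

theorem eq_of_affine_rpow_eq {α β s γ δ t : ℝ} (hδ : δ ≠ 0) (ht : t ≠ 0)
    (h : ∀ x ∈ Ioo (0 : ℝ) 1, α + β * x ^ s = γ + δ * x ^ t) :
    s = t ∧ β = δ ∧ α = γ := by
  have hy₀ : (0 : ℝ) < 1 / 2 := by norm_num
  have hy₁ : (1 / 2 : ℝ) ≠ 1 := by norm_num
  have hpow (n : ℕ) (hn : n ≠ 0) :
      α + β * ((1 / 2) ^ s) ^ n = γ + δ * ((1 / 2) ^ t) ^ n := by
    rw [rpow_pow_comm hy₀.le, rpow_pow_comm hy₀.le]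
    exact h _ ⟨pow_pos hy₀ n, pow_lt_one₀ hy₀.le (by norm_num) hn⟩
  have hv₁ : (1 / 2 : ℝ) ^ t ≠ 1 := fun h₁ ↦
    ht ((rpow_right_inj hy₀ hy₁).mp (h₁.trans (rpow_zero _).symm))
  obtain ⟨huv, hβ, hα⟩ := eq_of_affine_pow_eq hδ (rpow_pos_of_pos hy₀ t).ne' hv₁
    (by simpa using hpow 1 one_ne_zero) (hpow 2 two_ne_zero) (hpow 3 three_ne_zero)
  exact ⟨(rpow_right_inj hy₀ hy₁).mp huv, hβ, hα⟩

theorem index_flood_gp_parameters_general (μS σS ξS μR σR ξR C : ℝ)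
    (hσR : 0 < σR) (hξR : ξR ≠ 0) (hC : 0 < C)
    (h : ∀ p ∈ Set.Ioo (0 : ℝ) 1,
      μS + σS / ξS * ((1 - p) ^ (-ξS) - 1) = C * (μR + σR / ξR * ((1 - p) ^ (-ξR) - 1))) :
    ξS = ξR ∧ μS = C * μR ∧ σS = C * σR := by
  have hx : ∀ x ∈ Ioo (0 : ℝ) 1, (μS - σS / ξS) + σS / ξS * x ^ (-ξS) =
      C * (μR - σR / ξR) + C * (σR / ξR) * x ^ (-ξR) := by
    intro x ⟨hx₀, hx₁⟩
    have := h (1 - x) ⟨by linarith, by linarith⟩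
    rw [sub_sub_cancel] at this
    linear_combination this
  obtain ⟨hξ, hσ, hμ⟩ := eq_of_affine_rpow_eq
    (mul_ne_zero hC.ne' (div_ne_zero hσR.ne' hξR)) (neg_ne_zero.mpr hξR) hx
  have hξ : ξS = ξR := neg_inj.mp hξ
  subst hξ
  refine ⟨rfl, by linear_combination hμ + hσ, ?_⟩
  field_simp at hσ
  exact hσ

/-- If the GP quantile functions of two GP distributions satisfy the index flood relation
`Q^(S)(p) = C · Q^(R)(p)` for all `p ∈ (0,1)`, with `C > 0`, then the shape parameters
coincide and the location and scale parameters scale by `C`. -/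
theorem index_flood_gp_parameters (μS σS ξS μR σR ξR C : ℝ)
    (hσS : 0 < σS) (hσR : 0 < σR) (hξS : ξS ≠ 0) (hξR : ξR ≠ 0) (hC : 0 < C)
    (h : ∀ p ∈ Set.Ioo (0 : ℝ) 1,
      μS + σS / ξS * ((1 - p) ^ (-ξS) - 1) = C * (μR + σR / ξR * ((1 - p) ^ (-ξR) - 1))) :
    ξS = ξR ∧ μS = C * μR ∧ σS = C * σR :=
  index_flood_gp_parameters_general μS σS ξS μR σR ξR C hσR hξR hC h
end

section
/- If X is GP distributed with parameters (μ, σ, ξ), ξ ≠ 0, and u > μ satisfies 1 + ξ(u − μ)/σ > 0, then conditionally on X > u, the excess X − u is GP distributed with location 0, scale σ + ξ(u − μ), and the same shape ξ (threshold stability of the GP family). -/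
open MeasureTheory Real Set

/-- CDF of the Generalized Pareto distribution with location `μ`, scale `σ`, shape `ξ`. -/
noncomputable def gpCDF (μ σ ξ x : ℝ) : ℝ :=
  if x < μ then 0
  else if 0 < 1 + ξ * (x - μ) / σ then 1 - (1 + ξ * (x - μ) / σ) ^ (-1 / ξ)
  else 1

/-! The GP survival function at `u + y` factors as the survival function at `u` times the
survival function of GP`(0, σ + ξ(u - μ), ξ)` at `y`, because
`1 + ξ(u + y - μ)/σ = (1 + ξ(u - μ)/σ) · (1 + ξ y/(σ + ξ(u - μ)))` and `t ↦ t ^ (-1/ξ)` is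
multiplicative on positive reals. Dividing by the survival function at `u` gives the
conditional law of the excess. -/

section GeneralizedPareto

variable {μ σ ξ x : ℝ}

lemma gpCDF_of_lt (hx : x < μ) : gpCDF μ σ ξ x = 0 := if_pos hx

lemma gpCDF_of_pos (hx : μ ≤ x) (h : 0 < 1 + ξ * (x - μ) / σ) :
    gpCDF μ σ ξ x = 1 - (1 + ξ * (x - μ) / σ) ^ (-1 / ξ) := by
  rw [gpCDF, if_neg hx.not_gt, if_pos h]

lemma gpCDF_of_nonpos (hx : μ ≤ x) (h : 1 + ξ * (x - μ) / σ ≤ 0) : gpCDF μ σ ξ x = 1 := by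
  rw [gpCDF, if_neg hx.not_gt, if_neg h.not_gt]

lemma one_add_mul_rpow_neg_one_div_le_one {a : ℝ} (ha : 0 ≤ a) (h : 0 < 1 + ξ * a) :
    (1 + ξ * a) ^ (-1 / ξ) ≤ 1 := by
  rcases lt_trichotomy ξ 0 with hξ | rfl | hξ
  · exact rpow_le_one h.le (by nlinarith) (div_nonneg_of_nonpos (by norm_num) hξ.le)
  · simp
  · exact rpow_le_one_of_one_le_of_nonpos (by nlinarith)
      (div_nonpos_of_nonpos_of_nonneg (by norm_num) hξ.le)

lemma gpCDF_nonneg (hσ : 0 < σ) : 0 ≤ gpCDF μ σ ξ x := by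
  unfold gpCDF
  split_ifs with hlt hpos
  · exact le_rfl
  · rw [mul_div_assoc] at hpos ⊢
    exact sub_nonneg.2 <|
      one_add_mul_rpow_neg_one_div_le_one (div_nonneg (by linarith) hσ.le) hpos
  · exact zero_le_one

lemma gpCDF_add_sub_gpCDF {u y : ℝ} (hσ : 0 < σ) (hu : μ ≤ u)
    (hsupp : 0 < 1 + ξ * (u - μ) / σ) (hy : 0 ≤ y) :
    gpCDF μ σ ξ (u + y) - gpCDF μ σ ξ u
      = gpCDF 0 (σ + ξ * (u - μ)) ξ y * (1 - gpCDF μ σ ξ u) := by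
  set s := 1 + ξ * (u - μ) / σ
  have hscale : σ + ξ * (u - μ) = σ * s := by simp only [s]; field_simp
  have hfactor : 1 + ξ * (u + y - μ) / σ = s * (1 + ξ * (y - 0) / (σ + ξ * (u - μ))) := by
    rw [hscale, mul_add, mul_one, div_mul_eq_div_div, mul_div_cancel₀ _ hsupp.ne']
    simp only [s]
    ring
  rw [gpCDF_of_pos hu hsupp]
  rcases lt_or_ge 0 (1 + ξ * (y - 0) / (σ + ξ * (u - μ))) with hw | hw
  · rw [gpCDF_of_pos (by linarith) (hfactor ▸ mul_pos hsupp hw), gpCDF_of_pos hy hw, hfactor,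
      mul_rpow hsupp.le hw.le]
    ring
  · rw [gpCDF_of_nonpos (by linarith) (hfactor ▸ mul_nonpos_of_nonneg_of_nonpos hsupp.le hw),
      gpCDF_of_nonpos hy hw]
    ring

end GeneralizedPareto

section Excess

variable {Ω : Type*} [MeasurableSpace Ω] {P : Measure Ω} {X : Ω → ℝ}

lemma measure_excess_le_eq_sub [IsFiniteMeasure P] (hX : Measurable X) {u y : ℝ}
    (hy : 0 ≤ y) :
    P {ω | u < X ω ∧ X ω - u ≤ y} = P {ω | X ω ≤ u + y} - P {ω | X ω ≤ u} := by
  have hdiff : {ω | u < X ω ∧ X ω - u ≤ y} = {ω | X ω ≤ u + y} \ {ω | X ω ≤ u} := by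
    ext ω
    simp only [mem_ofPred_eq, mem_sdiff, not_le]
    constructor <;> rintro ⟨h₁, h₂⟩ <;> constructor <;> linarith
  exact hdiff ▸ measure_sdiff (fun ω (h : X ω ≤ u) => show X ω ≤ u + y by linarith)
    (measurableSet_le hX measurable_const).nullMeasurableSet (measure_ne_top _ _)

lemma measure_gt_eq_one_sub [IsProbabilityMeasure P] (hX : Measurable X) (u : ℝ) :
    P {ω | u < X ω} = 1 - P {ω | X ω ≤ u} := by
  rw [← prob_compl_eq_one_sub (measurableSet_le hX measurable_const)]
  congr 1
  ext ω
  simp [not_le]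

end Excess

theorem gp_threshold_stability_general {Ω : Type*} [MeasurableSpace Ω]
    (P : Measure Ω) [IsProbabilityMeasure P]
    (X : Ω → ℝ) (hX : Measurable X) (μ σ ξ u : ℝ) (hσ : 0 < σ)
    (hu : μ < u) (hsupp : 0 < 1 + ξ * (u - μ) / σ)
    (hGP : ∀ x : ℝ, P {ω | X ω ≤ x} = ENNReal.ofReal (gpCDF μ σ ξ x)) :
    ∀ y : ℝ, P {ω | u < X ω ∧ X ω - u ≤ y} / P {ω | u < X ω}
      = ENNReal.ofReal (gpCDF 0 (σ + ξ * (u - μ)) ξ y) := by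
  intro y
  have hFu : 0 ≤ gpCDF μ σ ξ u := gpCDF_nonneg hσ
  have htail : 0 < 1 - gpCDF μ σ ξ u := by
    rw [gpCDF_of_pos hu.le hsupp, sub_sub_cancel]
    exact rpow_pos_of_pos hsupp _
  have hden : P {ω | u < X ω} = ENNReal.ofReal (1 - gpCDF μ σ ξ u) := by
    rw [measure_gt_eq_one_sub hX, hGP, ← ENNReal.ofReal_one, ← ENNReal.ofReal_sub _ hFu]
  rcases lt_or_ge y 0 with hy | hy
  · have hempty : {ω | u < X ω ∧ X ω - u ≤ y} = ∅ :=
      eq_empty_of_forall_notMem fun ω ⟨h₁, h₂⟩ => by linarith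
    rw [hempty, measure_empty, ENNReal.zero_div, gpCDF_of_lt hy, ENNReal.ofReal_zero]
  · rw [measure_excess_le_eq_sub hX hy, hGP, hGP, ← ENNReal.ofReal_sub _ hFu,
      gpCDF_add_sub_gpCDF hσ hu.le hsupp hy, hden, ENNReal.ofReal_mul' htail.le,
      ENNReal.mul_div_cancel_right (by simpa using htail) ENNReal.ofReal_ne_top]

/-- Threshold stability of the GP family: if `X` is GP`(μ, σ, ξ)` and `u > μ` lies in the
support, then conditionally on `X > u` the excess `X - u` is GP with location `0`,
scale `σ + ξ(u - μ)` and the same shape `ξ`. -/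
theorem gp_threshold_stability {Ω : Type*} [MeasurableSpace Ω]
    (P : Measure Ω) [IsProbabilityMeasure P]
    (X : Ω → ℝ) (hX : Measurable X) (μ σ ξ u : ℝ) (hσ : 0 < σ) (hξ : ξ ≠ 0)
    (hu : μ < u) (hsupp : 0 < 1 + ξ * (u - μ) / σ)
    (hGP : ∀ x : ℝ, P {ω | X ω ≤ x} = ENNReal.ofReal (gpCDF μ σ ξ x)) :
    ∀ y : ℝ, P {ω | u < X ω ∧ X ω - u ≤ y} / P {ω | u < X ω}
      = ENNReal.ofReal (gpCDF 0 (σ + ξ * (u - μ)) ξ y) :=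
  gp_threshold_stability_general P X hX μ σ ξ u hσ hu hsupp hGP
end
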